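/- arXiv:1201.1812 — 12 statements merged into one kernel-verified Lean document; each statement's English description precedes it below -/
import Mathlib

section
/- Suppose M_S ≥ M_k. Let a be an integer with 0 ≤ a < M_k, and let à be any integer with 0 ≤ à < M_n such that à ≡ a (mod m_i) for every i ∈ S. Then Z := (M_S̄ · Ã) mod M_n equals M_S̄ · a; in particular M_S̄ divides Z and a = Z / M_S̄. (Fixed-transform interpolation over the integers.) -/
open Finset

/-- Fixed-transform interpolation over the integers: if `M_S ≥ M_k`, `0 ≤ a < M_k`,
and `Ã ≡ a (mod mᵢ)` for all `i ∈ S`, then `Z := (M_S̄·Ã) mod Mₙ` equals `M_S̄·a`;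
in particular `M_S̄ ∣ Z` and `a = Z / M_S̄`. -/
theorem integer_fixed_transform_interpolation
    (n : ℕ) (hn : 1 ≤ n) (m : ℕ → ℕ)
    (hpos : ∀ i < n, 0 < m i)
    (hcop : ∀ i < n, ∀ j < n, i ≠ j → Nat.Coprime (m i) (m j))
    (k : ℕ) (hk1 : 1 ≤ k) (hkn : k ≤ n)
    (S : Finset ℕ) (hS : S ⊆ Finset.range n)
    (hMS : (∏ i ∈ Finset.range k, m i) ≤ ∏ i ∈ S, m i)
    (a : ℕ) (ha : a < ∏ i ∈ Finset.range k, m i)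
    (A : ℕ) (hA : A < ∏ i ∈ Finset.range n, m i)
    (hcong : ∀ i ∈ S, A ≡ a [MOD m i]) :
    ((∏ i ∈ Finset.range n \ S, m i) * A) % (∏ i ∈ Finset.range n, m i)
        = (∏ i ∈ Finset.range n \ S, m i) * a ∧
    (∏ i ∈ Finset.range n \ S, m i)
        ∣ ((∏ i ∈ Finset.range n \ S, m i) * A) % (∏ i ∈ Finset.range n, m i) ∧
    (((∏ i ∈ Finset.range n \ S, m i) * A) % (∏ i ∈ Finset.range n, m i))
        / (∏ i ∈ Finset.range n \ S, m i) = a := by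
  set MS : ℕ := ∏ i ∈ S, m i with hMSdef
  set MC : ℕ := ∏ i ∈ Finset.range n \ S, m i with hMCdef
  have hprod : MC * MS = ∏ i ∈ Finset.range n, m i := Finset.prod_sdiff hS
  -- A ≡ a [MOD MS]
  have hdvd : ((MS : ℕ) : ℤ) ∣ (a : ℤ) - (A : ℤ) := by
    have h : (∏ i ∈ S, (m i : ℤ)) ∣ (a : ℤ) - (A : ℤ) := by
      apply Finset.prod_dvd_of_coprime
      · intro i hi j hj hij
        exact Int.isCoprime_iff_gcd_eq_one.mpr
          (hcop i (Finset.mem_range.mp (hS hi)) j (Finset.mem_range.mp (hS hj)) hij)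
      · intro i hi
        exact (Nat.modEq_iff_dvd).mp (hcong i hi)
    simpa [hMSdef] using h
  have hmod : A ≡ a [MOD MS] := (Nat.modEq_iff_dvd).mpr hdvd
  have hmod2 : MC * A ≡ MC * a [MOD MC * MS] := hmod.mul_left' MC
  rw [hprod] at hmod2
  have hMCpos : 0 < MC := Finset.prod_pos fun i hi =>
    hpos i (Finset.mem_range.mp (Finset.mem_sdiff.mp hi).1)
  have hlt : MC * a < ∏ i ∈ Finset.range n, m i := by
    rw [← hprod]
    exact Nat.mul_lt_mul_of_le_of_lt (le_refl MC) (lt_of_lt_of_le ha hMS) hMCpos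
  have hmain : (MC * A) % (∏ i ∈ Finset.range n, m i) = MC * a := by
    have := hmod2
    unfold Nat.ModEq at this
    rw [this, Nat.mod_eq_of_lt hlt]
  refine ⟨hmain, ?_, ?_⟩
  · rw [hmain]; exact Dvd.intro a rfl
  · rw [hmain, Nat.mul_div_cancel_left a hMCpos]
end

section
/- Suppose deg M_S ≥ K (equivalently Σ_{i∉S} deg m_i ≤ N−K). Let a ∈ F[x] with deg a < K, and let à ∈ F[x] with deg à < N be any polynomial such that à ≡ a (mod m_i) for every i ∈ S. Then Z := (M_S̄ · Ã) mod M_n equals M_S̄ · a; in particular M_S̄ divides Z and a = Z / M_S̄. (Fixed-transform interpolation for polynomial remainder codes.) -/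
open Polynomial Finset

/-- Fixed-transform interpolation for polynomial remainder codes:
if `deg M_S ≥ K`, `deg a < K`, and `Ã ≡ a (mod mᵢ)` for all `i ∈ S` with `deg Ã < N`,
then `Z := (M_S̄·Ã) mod Mₙ` equals `M_S̄·a`; in particular `M_S̄ ∣ Z` and `a = Z / M_S̄`. -/
theorem polynomial_fixed_transform_interpolation
    {F : Type*} [Field F] (n : ℕ) (hn : 1 ≤ n)
    (m : Fin n → F[X])
    (hmonic : ∀ i, (m i).Monic)
    (hdeg : ∀ i, 1 ≤ (m i).natDegree)
    (hcop : ∀ i j, i ≠ j → IsCoprime (m i) (m j))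
    (k : ℕ) (hk1 : 1 ≤ k) (hkn : k ≤ n)
    (N K : ℕ)
    (hN : N = (∏ i, m i).natDegree)
    (hK : K = (∏ i ∈ Finset.univ.filter (fun i : Fin n => (i : ℕ) < k), m i).natDegree)
    (S : Finset (Fin n))
    (hS : K ≤ (∏ i ∈ S, m i).natDegree)
    (a : F[X]) (ha : a.degree < (K : WithBot ℕ))
    (A : F[X]) (hA : A.degree < (N : WithBot ℕ))
    (hcong : ∀ i ∈ S, m i ∣ (A - a)) :
    ((∏ i ∈ Sᶜ, m i) * A) %ₘ (∏ i, m i) = (∏ i ∈ Sᶜ, m i) * a ∧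
    (∏ i ∈ Sᶜ, m i) ∣ ((∏ i ∈ Sᶜ, m i) * A) %ₘ (∏ i, m i) ∧
    (((∏ i ∈ Sᶜ, m i) * A) %ₘ (∏ i, m i)) /ₘ (∏ i ∈ Sᶜ, m i) = a := by
  have hmonS : (∏ i ∈ S, m i).Monic := monic_prod_of_monic _ _ fun i _ => hmonic i
  have hmonSc : (∏ i ∈ Sᶜ, m i).Monic := monic_prod_of_monic _ _ fun i _ => hmonic i
  have hmonMn : (∏ i, m i).Monic := monic_prod_of_monic _ _ fun i _ => hmonic i
  have hMn : (∏ i, m i) = (∏ i ∈ Sᶜ, m i) * (∏ i ∈ S, m i) := by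
    rw [mul_comm, Finset.prod_mul_prod_compl]
  have hdvd : (∏ i ∈ S, m i) ∣ (A - a) :=
    Finset.prod_dvd_of_coprime (fun i _ j _ hij => hcop i j hij) hcong
  obtain ⟨c, hc⟩ := hdvd
  have key : (∏ i ∈ Sᶜ, m i) * A = (∏ i ∈ Sᶜ, m i) * a + (∏ i, m i) * c := by
    rw [hMn]
    linear_combination (∏ i ∈ Sᶜ, m i) * hc
  have hdeglt : ((∏ i ∈ Sᶜ, m i) * a).degree < (∏ i, m i).degree := by
    rw [degree_mul, hMn, degree_mul]
    apply WithBot.add_lt_add_left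
    · rw [degree_eq_natDegree hmonSc.ne_zero]; exact WithBot.coe_ne_bot
    · calc a.degree < (K : WithBot ℕ) := ha
        _ ≤ ((∏ i ∈ S, m i).natDegree : WithBot ℕ) := by exact_mod_cast hS
        _ = (∏ i ∈ S, m i).degree := (degree_eq_natDegree hmonS.ne_zero).symm
  have main : ((∏ i ∈ Sᶜ, m i) * A) %ₘ (∏ i, m i) = (∏ i ∈ Sᶜ, m i) * a := by
    rw [key, add_modByMonic, (modByMonic_eq_self_iff hmonMn).2 hdeglt,
      (modByMonic_eq_zero_iff_dvd hmonMn).2 (Dvd.intro _ rfl), add_zero]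
  refine ⟨main, ?_, ?_⟩
  · rw [main]; exact Dvd.intro _ rfl
  · rw [main, mul_divByMonic_cancel_left a hmonSc]
end

section
/- Assume the Ordered-Degree Condition deg m_0 ≤ deg m_1 ≤ … ≤ deg m_{n-1}. Then for every nonzero a ∈ F[x] with deg a < K, the number of indices i ∈ {0,…,n-1} with a mod m_i ≠ 0 is at least n − k + 1; i.e., every nonzero codeword of the polynomial remainder code has Hamming weight at least n − k + 1. -/
/-!
If `a ≠ 0` vanishes modulo `m i` for all `i` in a set `Z`, then by pairwise coprimality the product
of these `m i` divides `a`, so `∑_{i ∈ Z} deg m_i ≤ deg a < K`. If `Z` had at least `k` elements,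
the Ordered-Degree Condition would give `∑_{i ∈ Z} deg m_i ≥ deg m_0 + ⋯ + deg m_{k-1} = K`.
Hence at most `k - 1` residues vanish.
-/

open Polynomial Finset

namespace Finset

variable {ι M : Type*} [AddCommMonoid M] [LinearOrder M] [IsOrderedAddMonoid M]
  [CanonicallyOrderedAdd M] {f : ι → M}

theorem sum_le_sum_of_card_le_of_forall_le {s t : Finset ι} (hst : #s ≤ #t)
    (hf : ∀ i ∈ s, ∀ j ∈ t, f i ≤ f j) : ∑ i ∈ s, f i ≤ ∑ j ∈ t, f j := by
  rcases t.eq_empty_or_nonempty with rfl | ht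
  · simp_all
  obtain ⟨j₀, hj₀, hmin⟩ := t.exists_min_image f ht
  calc ∑ i ∈ s, f i ≤ #s • f j₀ := s.sum_le_card_nsmul f _ fun i hi => hf i hi j₀ hj₀
    _ ≤ #t • f j₀ := nsmul_le_nsmul_left zero_le hst
    _ ≤ ∑ j ∈ t, f j := t.card_nsmul_le_sum f _ hmin

theorem sum_le_sum_of_card_le_of_forall_sdiff_le [DecidableEq ι] {s t : Finset ι} (hst : #s ≤ #t)
    (hf : ∀ i ∈ s \ t, ∀ j ∈ t \ s, f i ≤ f j) : ∑ i ∈ s, f i ≤ ∑ j ∈ t, f j := by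
  rw [← sum_inter_add_sum_sdiff s t, ← sum_inter_add_sum_sdiff t s, inter_comm]
  exact add_le_add le_rfl
    (sum_le_sum_of_card_le_of_forall_le (card_sdiff_le_card_sdiff_iff.mpr hst) hf)

end Finset

theorem Monotone.sum_filter_val_lt_le_sum {M : Type*} [AddCommMonoid M] [LinearOrder M]
    [IsOrderedAddMonoid M] [CanonicallyOrderedAdd M] {n k : ℕ} {f : Fin n → M} (hf : Monotone f)
    {S : Finset (Fin n)} (hk : k ≤ #S) :
    ∑ i ∈ univ.filter (fun i : Fin n => (i : ℕ) < k), f i ≤ ∑ i ∈ S, f i := by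
  refine sum_le_sum_of_card_le_of_forall_sdiff_le ?_ fun i hi j hj => hf ?_
  · exact Fin.card_filter_val_lt.trans_le (min_le_right _ _ |>.trans hk)
  · simp only [mem_sdiff, mem_filter, mem_univ, true_and] at hi hj
    exact Fin.le_def.mpr (by omega)

namespace Polynomial

theorem sum_natDegree_le_natDegree_of_forall_dvd {R ι : Type*} [CommRing R] [NoZeroDivisors R]
    {m : ι → R[X]} {s : Finset ι} (hmonic : ∀ i ∈ s, (m i).Monic)
    (hcop : (s : Set ι).Pairwise (Function.onFun IsCoprime m)) {a : R[X]} (ha : a ≠ 0)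
    (hdvd : ∀ i ∈ s, m i ∣ a) : ∑ i ∈ s, (m i).natDegree ≤ a.natDegree := by
  rw [← natDegree_prod_of_monic s m hmonic]
  exact natDegree_le_of_dvd (prod_dvd_of_coprime hcop hdvd) ha

end Polynomial

theorem polynomial_remainder_code_min_hamming_weight_general
    {F : Type*} [Field F] [DecidableEq F] (n : ℕ)
    (m : Fin n → F[X])
    (hmonic : ∀ i, (m i).Monic)
    (hcop : ∀ i j, i ≠ j → IsCoprime (m i) (m j))
    (k : ℕ) (hkn : k ≤ n)
    (K : ℕ)
    (hK : K = (∏ i ∈ Finset.univ.filter (fun i : Fin n => (i : ℕ) < k), m i).natDegree)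
    (hord : ∀ i j : Fin n, i ≤ j → (m i).natDegree ≤ (m j).natDegree) :
    ∀ a : F[X], a ≠ 0 → a.degree < (K : WithBot ℕ) →
      n - k + 1 ≤ (Finset.univ.filter (fun i : Fin n => a %ₘ m i ≠ 0)).card := by
  intro a ha hadeg
  set Z := univ.filter (fun i : Fin n => a %ₘ m i = 0)
  have hsplit : #Z + #(univ.filter (fun i : Fin n => a %ₘ m i ≠ 0)) = n := by
    rw [card_filter_add_card_filter_not, card_univ, Fintype.card_fin]
  suffices hZk : #Z < k by omega
  by_contra! hkZ
  have haK : a.natDegree < K := (natDegree_lt_iff_degree_lt ha).mpr hadeg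
  have hZ : ∑ i ∈ Z, (m i).natDegree ≤ a.natDegree :=
    sum_natDegree_le_natDegree_of_forall_dvd (fun i _ => hmonic i) (fun i _ j _ => hcop i j)
      ha fun i hi => (modByMonic_eq_zero_iff_dvd (hmonic i)).mp (mem_filter.mp hi).2
  have hKZ : K ≤ ∑ i ∈ Z, (m i).natDegree := by
    rw [hK, natDegree_prod_of_monic _ _ fun i _ => hmonic i]
    exact Monotone.sum_filter_val_lt_le_sum (fun i j => hord i j) hkZ
  omega

/-- Under the Ordered-Degree Condition, every nonzero codeword of a polynomial
remainder code has Hamming weight at least `n − k + 1`. -/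
theorem polynomial_remainder_code_min_hamming_weight
    {F : Type*} [Field F] [DecidableEq F] (n : ℕ) (hn : 1 ≤ n)
    (m : Fin n → F[X])
    (hmonic : ∀ i, (m i).Monic)
    (hdeg : ∀ i, 1 ≤ (m i).natDegree)
    (hcop : ∀ i j, i ≠ j → IsCoprime (m i) (m j))
    (k : ℕ) (hk1 : 1 ≤ k) (hkn : k ≤ n)
    (K : ℕ)
    (hK : K = (∏ i ∈ Finset.univ.filter (fun i : Fin n => (i : ℕ) < k), m i).natDegree)
    (hord : ∀ i j : Fin n, i ≤ j → (m i).natDegree ≤ (m j).natDegree) :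
    ∀ a : F[X], a ≠ 0 → a.degree < (K : WithBot ℕ) →
      n - k + 1 ≤ (Finset.univ.filter (fun i : Fin n => a %ₘ m i ≠ 0)).card :=
  polynomial_remainder_code_min_hamming_weight_general n m hmonic hcop k hkn K hK hord
end

section
/- Assume m_0 ≤ m_1 ≤ … ≤ m_{n-1}. Then for every integer a with 1 ≤ a < M_k, the number of indices i ∈ {0,…,n-1} with a mod m_i ≠ 0 is at least n − k + 1. (Minimum Hamming weight bound for integer Chinese remainder codes.) -/
open Finset

/- Let `S` be the set of indices `i` with `mᵢ ∣ a`. By pairwise coprimality `∏_{i ∈ S} mᵢ ∣ a`,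
so `∏_{i ∈ S} mᵢ ≤ a < M_k`. Since the moduli are sorted, the product of any `k` of the first `n`
moduli is at least `M_k`, the product of the `k` smallest ones; hence `|S| < k`. -/

theorem Finset.prod_range_le_prod_of_le_card {m : ℕ → ℕ} {S : Finset ℕ}
    (hmono : ∀ i j, i ≤ j → j ∈ S → m i ≤ m j) (hpos : ∀ i ∈ S, 0 < m i) {k : ℕ}
    (hk : k ≤ #S) : ∏ i ∈ range k, m i ≤ ∏ i ∈ S, m i := by
  induction k generalizing S with
  | zero => rw [prod_range_zero]; exact prod_pos hpos
  | succ k ih =>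
    -- drop the largest element `s` of `S`: `k ≤ s` since `S ⊆ [0, s]`, so `m k ≤ m s`
    have hne : S.Nonempty := card_pos.mp (by omega)
    set s := S.max' hne
    have hs : s ∈ S := S.max'_mem hne
    have hks : k ≤ s := by
      have : #S ≤ #(range (s + 1)) :=
        card_le_card fun i hi => mem_range.mpr (Nat.lt_succ_of_le (S.le_max' i hi))
      rw [card_range] at this
      omega
    have hrest : ∏ i ∈ range k, m i ≤ ∏ i ∈ S.erase s, m i :=
      ih (fun i j hij hj => hmono i j hij (mem_of_mem_erase hj))
        (fun i hi => hpos i (mem_of_mem_erase hi)) (by rw [card_erase_of_mem hs]; omega)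
    calc ∏ i ∈ range (k + 1), m i = (∏ i ∈ range k, m i) * m k := prod_range_succ _ _
      _ ≤ (∏ i ∈ S.erase s, m i) * m s := Nat.mul_le_mul hrest (hmono k s hks hs)
      _ = ∏ i ∈ S, m i := prod_erase_mul S m hs

theorem Finset.prod_dvd_of_pairwise_coprime {m : ℕ → ℕ} {S : Finset ℕ} {a : ℕ}
    (hcop : (S : Set ℕ).Pairwise fun i j => Nat.Coprime (m i) (m j)) (hdvd : ∀ i ∈ S, m i ∣ a) :
    ∏ i ∈ S, m i ∣ a :=
  prod_dvd_of_isRelPrime (hcop.mono' fun _ _ h => Nat.coprime_iff_isRelPrime.mp h) hdvd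

theorem integer_crt_code_min_hamming_weight_general
    (n : ℕ) (m : ℕ → ℕ)
    (hcop : ∀ i < n, ∀ j < n, i ≠ j → Nat.Coprime (m i) (m j))
    (k : ℕ) (hkn : k ≤ n)
    (hord : ∀ i j, i ≤ j → j < n → m i ≤ m j) :
    ∀ a : ℕ, 1 ≤ a → a < ∏ i ∈ Finset.range k, m i →
      n - k + 1 ≤ ((Finset.range n).filter (fun i => a % m i ≠ 0)).card := by
  intro a ha haM
  set S := (range n).filter fun i => a % m i = 0
  have hSn : ∀ i ∈ S, i < n := fun i hi => mem_range.mp (mem_filter.mp hi).1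
  have hSdvd : ∀ i ∈ S, m i ∣ a := fun i hi => Nat.dvd_of_mod_eq_zero (mem_filter.mp hi).2
  have hprod : ∏ i ∈ S, m i ≤ a :=
    Nat.le_of_dvd ha <| prod_dvd_of_pairwise_coprime
      (fun i hi j hj hij => hcop i (hSn i hi) j (hSn j hj) hij) hSdvd
  have hcard : #S < k := by
    by_contra! hk
    have := prod_range_le_prod_of_le_card (fun i j hij hj => hord i j hij (hSn j hj))
      (fun i hi => Nat.pos_of_dvd_of_pos (hSdvd i hi) ha) hk
    omega
  have hsplit : #S + #((range n).filter fun i => a % m i ≠ 0) = n :=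
    (card_filter_add_card_filter_not _).trans (card_range n)
  omega

/-- Minimum Hamming weight bound for integer Chinese remainder codes:
if `m₀ ≤ m₁ ≤ … ≤ m_{n-1}` then every integer `a` with `1 ≤ a < M_k` has at
least `n − k + 1` nonzero residues `a mod mᵢ`. -/
theorem integer_crt_code_min_hamming_weight
    (n : ℕ) (hn : 1 ≤ n) (m : ℕ → ℕ)
    (hpos : ∀ i < n, 0 < m i)
    (hcop : ∀ i < n, ∀ j < n, i ≠ j → Nat.Coprime (m i) (m j))
    (k : ℕ) (hk1 : 1 ≤ k) (hkn : k ≤ n)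
    (hord : ∀ i j, i ≤ j → j < n → m i ≤ m j) :
    ∀ a : ℕ, 1 ≤ a → a < ∏ i ∈ Finset.range k, m i →
      n - k + 1 ≤ ((Finset.range n).filter (fun i => a % m i ≠ 0)).card :=
  integer_crt_code_min_hamming_weight_general n m hcop k hkn hord
end

section
/- Assume F is a finite field, K ≥ 1, and the Ordered-Degree Condition deg m_0 ≤ deg m_1 ≤ … ≤ deg m_{n-1}. Then the minimum Hamming distance of the polynomial remainder code C, i.e. the minimum over pairs of distinct codewords c, c' ∈ C of the number of indices i with c_i ≠ c'_i, equals exactly n − k + 1. -/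
/-!
If two distinct codewords `ψ a`, `ψ a'` agree on a set `S` of positions, the pairwise coprime
moduli `m i` (`i ∈ S`) all divide the nonzero polynomial `a - a'`, so their degrees add up to less
than `K`. By the ordered-degree condition any `k` moduli have total degree at least `K`, the degree
of the first `k`; hence `#S < k`. Conversely `∏_{i < k-1} m i` has degree below `K` and its residue
vanishes exactly at the first `k - 1` positions, so it lies at distance `n - k + 1` from `0`.
-/

open Polynomial Finset Function

namespace Fin

lemma val_le_of_strictMono {k n : ℕ} {f : Fin k → Fin n} (hf : StrictMono f) (j : Fin k) :
    (j : ℕ) ≤ f j := by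
  simpa using card_le_card_of_injOn f (s := Iio j) (t := Iio (f j))
    (fun i hi => by simpa using hf (by simpa using hi)) hf.injective.injOn

lemma filter_val_lt_eq_map_castLEEmb {c n : ℕ} (hc : c ≤ n) :
    univ.filter (fun i : Fin n => (i : ℕ) < c) = univ.map (castLEEmb hc) := by
  ext i
  simp only [mem_filter, mem_univ, true_and, mem_map]
  exact ⟨fun h => ⟨⟨i, h⟩, rfl⟩, by rintro ⟨j, rfl⟩; simp⟩

lemma filter_val_lt_ssubset_filter_val_lt_succ {c n : ℕ} (hc : c < n) :
    univ.filter (fun i : Fin n => (i : ℕ) < c) ⊂ univ.filter (fun i : Fin n => (i : ℕ) < c + 1) :=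
  (ssubset_iff_of_subset (monotone_filter_right _ fun _ _ => Nat.lt_succ_of_lt)).mpr
    ⟨⟨c, hc⟩, by simp, by simp⟩

theorem sum_filter_val_lt_card_le_sum_of_monotone {M : Type*} [AddCommMonoid M] [PartialOrder M]
    [IsOrderedAddMonoid M] {n : ℕ} {f : Fin n → M} (hf : Monotone f) (S : Finset (Fin n)) :
    ∑ i ∈ univ.filter (fun i : Fin n => (i : ℕ) < #S), f i ≤ ∑ i ∈ S, f i := by
  conv_rhs => rw [← map_orderEmbOfFin_univ S rfl]
  rw [filter_val_lt_eq_map_castLEEmb ((card_le_univ S).trans_eq (Fintype.card_fin n)), sum_map,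
    sum_map]
  exact sum_le_sum fun j _ => hf (val_le_of_strictMono (S.orderEmbOfFin rfl).strictMono j)

end Fin

theorem Finset.dvd_prod_iff_mem_of_pairwise_isCoprime {R ι : Type*} [CommSemiring R]
    {m : ι → R} (hcop : Pairwise (IsCoprime on m)) (s : Finset ι) {j : ι} (hj : ¬IsUnit (m j)) :
    m j ∣ ∏ i ∈ s, m i ↔ j ∈ s := by
  refine ⟨fun hdvd => ?_, dvd_prod_of_mem m⟩
  by_contra hjs
  have hcop_prod : IsCoprime (m j) (∏ i ∈ s, m i) :=
    IsCoprime.prod_right fun i hi => hcop fun hji => hjs (hji ▸ hi)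
  exact hj (hcop_prod.isUnit_of_dvd hdvd)

namespace Polynomial

theorem sum_natDegree_le_of_forall_dvd {R : Type*} [CommRing R] [IsDomain R]
    {ι : Type*} {s : Finset ι} {m : ι → R[X]} {b : R[X]}
    (hcop : (s : Set ι).Pairwise (IsCoprime on m)) (hdvd : ∀ i ∈ s, m i ∣ b) (hb : b ≠ 0) :
    ∑ i ∈ s, (m i).natDegree ≤ b.natDegree := by
  have hm : ∀ i ∈ s, m i ≠ 0 := fun i hi h0 => hb (zero_dvd_iff.mp (h0 ▸ hdvd i hi))
  rw [← natDegree_prod _ _ hm]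
  exact natDegree_le_of_dvd (prod_dvd_of_coprime hcop hdvd) hb

theorem natDegree_prod_lt_of_ssubset {R ι : Type*} [CommSemiring R] [Nontrivial R]
    {s t : Finset ι} (hst : s ⊂ t) {m : ι → R[X]} (hmonic : ∀ i ∈ t, (m i).Monic)
    (hdeg : ∀ i ∈ t, 0 < (m i).natDegree) :
    (∏ i ∈ s, m i).natDegree < (∏ i ∈ t, m i).natDegree := by
  obtain ⟨j, hjt, hjs⟩ := exists_of_ssubset hst
  rw [natDegree_prod_of_monic _ _ fun i hi => hmonic i (hst.subset hi),
    natDegree_prod_of_monic _ _ hmonic]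
  exact sum_lt_sum_of_subset hst.subset hjt hjs (hdeg j hjt) fun _ _ _ => Nat.zero_le _

variable {R : Type*} [CommRing R] [DecidableEq R] {n : ℕ} {m : Fin n → R[X]}

theorem card_filter_modByMonic_eq_lt [IsDomain R] {k : ℕ} (hmonic : ∀ i, (m i).Monic)
    (hcop : Pairwise (IsCoprime on m)) (hord : Monotone fun i => (m i).natDegree)
    {a a' : R[X]} (hne : a ≠ a')
    (hdeg :
      (a - a').natDegree < (∏ i ∈ univ.filter (fun i : Fin n => (i : ℕ) < k), m i).natDegree) :
    #(univ.filter fun i => a %ₘ m i = a' %ₘ m i) < k := by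
  by_contra! hk
  obtain ⟨S, hS_agree, rfl⟩ := exists_subset_card_eq hk
  have hdvd : ∀ i ∈ S, m i ∣ a - a' := fun i hi => by
    rw [← modByMonic_eq_zero_iff_dvd (hmonic i), sub_modByMonic, (mem_filter.mp (hS_agree hi)).2,
      sub_self]
  have hS_le := sum_natDegree_le_of_forall_dvd (hcop.set_pairwise S) hdvd (sub_ne_zero.mpr hne)
  have hinit_le := Fin.sum_filter_val_lt_card_le_sum_of_monotone hord S
  rw [natDegree_prod_of_monic _ _ fun i _ => hmonic i] at hdeg
  omega

theorem card_filter_prod_modByMonic_ne_zero (hmonic : ∀ i, (m i).Monic)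
    (hcop : Pairwise (IsCoprime on m)) (hunit : ∀ i, ¬IsUnit (m i)) (c : ℕ) :
    #(univ.filter fun i => (∏ j ∈ univ.filter (fun j : Fin n => (j : ℕ) < c), m j) %ₘ m i ≠ 0)
      = n - c := by
  have hiff : ∀ i : Fin n,
      (∏ j ∈ univ.filter (fun j : Fin n => (j : ℕ) < c), m j) %ₘ m i ≠ 0 ↔ ¬(i : ℕ) < c := by
    intro i
    rw [ne_eq, modByMonic_eq_zero_iff_dvd (hmonic i),
      dvd_prod_iff_mem_of_pairwise_isCoprime hcop _ (hunit i), mem_filter]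
    simp
  have hsplit := card_filter_add_card_filter_not (s := univ) (p := fun i : Fin n => (i : ℕ) < c)
  rw [filter_congr fun i _ => hiff i]
  rw [Fin.card_filter_val_lt, card_univ, Fintype.card_fin] at hsplit
  omega

end Polynomial

theorem polynomial_remainder_code_min_hamming_distance_general
    {F : Type*} [Field F] [DecidableEq F] (n : ℕ)
    (m : Fin n → F[X])
    (hmonic : ∀ i, (m i).Monic)
    (hdeg : ∀ i, 1 ≤ (m i).natDegree)
    (hcop : ∀ i j, i ≠ j → IsCoprime (m i) (m j))
    (k : ℕ) (hk1 : 1 ≤ k) (hkn : k ≤ n)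
    (K : ℕ)
    (hK : K = (∏ i ∈ Finset.univ.filter (fun i : Fin n => (i : ℕ) < k), m i).natDegree)
    (hord : ∀ i j : Fin n, i ≤ j → (m i).natDegree ≤ (m j).natDegree) :
    IsLeast {d : ℕ | ∃ a a' : F[X], a.degree < (K : WithBot ℕ) ∧ a'.degree < (K : WithBot ℕ) ∧
        (fun i : Fin n => a %ₘ m i) ≠ (fun i : Fin n => a' %ₘ m i) ∧
        d = (Finset.univ.filter (fun i : Fin n => a %ₘ m i ≠ a' %ₘ m i)).card}
      (n - k + 1) := by
  have hpairwise : Pairwise (IsCoprime on m) := hcop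
  have hunit : ∀ i, ¬IsUnit (m i) := fun i => not_isUnit_of_natDegree_pos _ (hdeg i)
  constructor
  · obtain ⟨c, rfl⟩ : ∃ c, k = c + 1 := ⟨k - 1, by omega⟩
    set a := ∏ j ∈ univ.filter (fun j : Fin n => (j : ℕ) < c), m j
    have hcard := card_filter_prod_modByMonic_ne_zero hmonic hpairwise hunit c
    have ha_deg : a.natDegree < K := hK ▸ natDegree_prod_lt_of_ssubset
      (Fin.filter_val_lt_ssubset_filter_val_lt_succ hkn) (fun i _ => hmonic i) (fun i _ => hdeg i)
    have ha_ne : a ≠ 0 := (monic_prod_of_monic _ _ fun i _ => hmonic i).ne_zero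
    refine ⟨a, 0, (natDegree_lt_iff_degree_lt ha_ne).mp ha_deg, by simp, ?_, ?_⟩
    · intro h
      obtain ⟨i, hi⟩ := card_pos.mp (hcard ▸ Nat.sub_pos_of_lt hkn)
      exact (mem_filter.mp hi).2 (by simpa using congrFun h i)
    · simp only [zero_modByMonic]
      rw [hcard]
      omega
  · rintro d ⟨a, a', ha, ha', hne, rfl⟩
    have hne' : a ≠ a' := fun h => hne (h ▸ rfl)
    have hsub_deg : (a - a').natDegree < K :=
      (natDegree_lt_iff_degree_lt (sub_ne_zero.mpr hne')).mpr
        ((degree_sub_le a a').trans_lt (max_lt ha ha'))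
    have hagree := card_filter_modByMonic_eq_lt hmonic hpairwise hord hne' (hK ▸ hsub_deg)
    have hsplit := card_filter_add_card_filter_not (s := univ)
      (p := fun i : Fin n => a %ₘ m i ≠ a' %ₘ m i)
    simp only [not_not, card_univ, Fintype.card_fin] at hsplit
    omega

/-- For a finite field `F`, `K ≥ 1`, and the Ordered-Degree Condition, the minimum
Hamming distance of the polynomial remainder code equals exactly `n − k + 1`. -/
theorem polynomial_remainder_code_min_hamming_distance
    {F : Type*} [Field F] [Fintype F] [DecidableEq F] (n : ℕ) (hn : 1 ≤ n)
    (m : Fin n → F[X])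
    (hmonic : ∀ i, (m i).Monic)
    (hdeg : ∀ i, 1 ≤ (m i).natDegree)
    (hcop : ∀ i j, i ≠ j → IsCoprime (m i) (m j))
    (k : ℕ) (hk1 : 1 ≤ k) (hkn : k ≤ n)
    (K : ℕ)
    (hK : K = (∏ i ∈ Finset.univ.filter (fun i : Fin n => (i : ℕ) < k), m i).natDegree)
    (hK1 : 1 ≤ K)
    (hord : ∀ i j : Fin n, i ≤ j → (m i).natDegree ≤ (m j).natDegree) :
    IsLeast {d : ℕ | ∃ a a' : F[X], a.degree < (K : WithBot ℕ) ∧ a'.degree < (K : WithBot ℕ) ∧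
        (fun i : Fin n => a %ₘ m i) ≠ (fun i : Fin n => a' %ₘ m i) ∧
        d = (Finset.univ.filter (fun i : Fin n => a %ₘ m i ≠ a' %ₘ m i)).card}
      (n - k + 1) :=
  polynomial_remainder_code_min_hamming_distance_general n m hmonic hdeg hcop k hk1 hkn K hK hord
end

section
/- Assume the Ordered-Degree Condition deg m_0 ≤ deg m_1 ≤ … ≤ deg m_{n-1} and assume additionally deg m_k = deg m_{k+1} = … = deg m_{n-1}. Then for every tuple e = (e_0,…,e_{n-1}) with e_i ∈ F[x], if w_H(e) ≤ ⌊(n−k)/2⌋ then w_D(e) ≤ ⌊(N−K)/2⌋. -/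
/-!
If `k ≥ n` then `w_H(e) = 0`. Otherwise every `deg m_i` is at most `d = deg m_{n-1}`, and the last `n - k` moduli all have degree `d`,
so `N - K = (n - k) d`. Hence `w_D(e) ≤ w_H(e) · d ≤ ⌊(n - k)/2⌋ · d ≤ ⌊(n - k) d / 2⌋`.
-/

open Polynomial Finset

theorem Polynomial.natDegree_prod_sub_natDegree_prod_filter {R ι : Type*} [CommRing R]
    [NoZeroDivisors R] [Fintype ι] (m : ι → R[X]) (hm : ∀ i, m i ≠ 0) (p : ι → Prop)
    [DecidablePred p] :
    (∏ i, m i).natDegree - (∏ i with p i, m i).natDegree = ∑ i with ¬p i, (m i).natDegree := by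
  rw [natDegree_prod _ _ fun i _ ↦ hm i, natDegree_prod _ _ fun i _ ↦ hm i,
    ← sum_filter_add_sum_filter_not univ p, Nat.add_sub_cancel_left]

theorem Fin.card_filter_not_val_lt {n : ℕ} (k : ℕ) : #{i : Fin n | ¬(i : ℕ) < k} = n - k := by
  rw [filter_not, card_sdiff_of_subset (filter_subset _ _), card_filter_val_lt, card_univ,
    Fintype.card_fin]
  omega

theorem Nat.mul_le_mul_div_of_le_div {a b c : ℕ} (d : ℕ) (h : a ≤ b / c) :
    a * d ≤ b * d / c := by
  calc a * d ≤ b / c * d := Nat.mul_le_mul_right d h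
    _ ≤ b * d / c := by
      rcases Nat.eq_zero_or_pos c with rfl | hc
      · simp
      rw [Nat.le_div_iff_mul_le hc, Nat.mul_right_comm]
      exact Nat.mul_le_mul_right d (Nat.div_mul_le_self b c)

theorem hamming_weight_bound_implies_degree_weight_bound_general
    {F : Type*} [Field F] [DecidableEq F] (n : ℕ)
    (m : Fin n → F[X])
    (hmonic : ∀ i, (m i).Monic)
    (k : ℕ)
    (N K : ℕ)
    (hN : N = (∏ i, m i).natDegree)
    (hK : K = (∏ i ∈ Finset.univ.filter (fun i : Fin n => (i : ℕ) < k), m i).natDegree)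
    (hord : ∀ i j : Fin n, i ≤ j → (m i).natDegree ≤ (m j).natDegree)
    (heq : ∀ i j : Fin n, k ≤ (i : ℕ) → k ≤ (j : ℕ) → (m i).natDegree = (m j).natDegree) :
    ∀ e : Fin n → F[X],
      (Finset.univ.filter (fun i : Fin n => e i ≠ 0)).card ≤ (n - k) / 2 →
      ∑ i ∈ Finset.univ.filter (fun i : Fin n => e i ≠ 0), (m i).natDegree ≤ (N - K) / 2 := by
  intro e he
  obtain hnk | hkn := le_or_gt n k
  · rw [card_eq_zero.mp (show #{i | e i ≠ 0} = 0 by omega), sum_empty]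
    exact Nat.zero_le _
  set last : Fin n := ⟨n - 1, by omega⟩
  have hmax : ∀ i, (m i).natDegree ≤ (m last).natDegree :=
    fun i ↦ hord i last (Fin.le_def.mpr (by simp only [last]; omega))
  have hNK : N - K = (n - k) * (m last).natDegree := by
    rw [hN, hK, natDegree_prod_sub_natDegree_prod_filter m fun i ↦ (hmonic i).ne_zero,
      sum_congr rfl fun i hi ↦ heq i last (by simpa using hi) (by simp only [last]; omega),
      sum_const, Fin.card_filter_not_val_lt, smul_eq_mul]
  calc _ ≤ #{i | e i ≠ 0} • (m last).natDegree := sum_le_card_nsmul _ _ _ fun i _ ↦ hmax i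
    _ ≤ (N - K) / 2 := by
      rw [smul_eq_mul, hNK]
      exact Nat.mul_le_mul_div_of_le_div _ he

/-- Under the Ordered-Degree Condition together with
`deg m_k = … = deg m_{n-1}`, the implication `w_H(e) ≤ ⌊(n−k)/2⌋ → w_D(e) ≤ ⌊(N−K)/2⌋`
holds for every tuple `e`. -/
theorem hamming_weight_bound_implies_degree_weight_bound
    {F : Type*} [Field F] [DecidableEq F] (n : ℕ) (hn : 1 ≤ n)
    (m : Fin n → F[X])
    (hmonic : ∀ i, (m i).Monic)
    (hdeg : ∀ i, 1 ≤ (m i).natDegree)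
    (hcop : ∀ i j, i ≠ j → IsCoprime (m i) (m j))
    (k : ℕ) (hk1 : 1 ≤ k) (hkn : k ≤ n)
    (N K : ℕ)
    (hN : N = (∏ i, m i).natDegree)
    (hK : K = (∏ i ∈ Finset.univ.filter (fun i : Fin n => (i : ℕ) < k), m i).natDegree)
    (hord : ∀ i j : Fin n, i ≤ j → (m i).natDegree ≤ (m j).natDegree)
    (heq : ∀ i j : Fin n, k ≤ (i : ℕ) → k ≤ (j : ℕ) → (m i).natDegree = (m j).natDegree) :
    ∀ e : Fin n → F[X],
      (Finset.univ.filter (fun i : Fin n => e i ≠ 0)).card ≤ (n - k) / 2 →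
      ∑ i ∈ Finset.univ.filter (fun i : Fin n => e i ≠ 0), (m i).natDegree ≤ (N - K) / 2 :=
  hamming_weight_bound_implies_degree_weight_bound_general n m hmonic k N K hN hK hord heq
end

section
/- Assume K ≥ 1 and let d = min{ w_D(S) : S ⊆ {0,…,n-1}, w_D(S) > N − K }. Then: (i) the minimum degree weight w_D(ψ(a)) over nonzero a ∈ F[x] with deg a < K equals d; (ii) the minimum degree-weighted distance d_D(c, c') over pairs of distinct codewords c, c' of the polynomial remainder code equals d; and (iii) d > N − K. -/
open Polynomial Finset

/-- Minimum degree-weighted distance: with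
`d = min{ w_D(S) : w_D(S) > N − K }`, (i) the minimum degree weight of a nonzero
codeword equals `d`, (ii) the minimum degree-weighted distance between distinct
codewords equals `d`, and (iii) `d > N − K`. -/
theorem polynomial_remainder_code_min_degree_weighted_distance
    {F : Type*} [Field F] [DecidableEq F] (n : ℕ) (hn : 1 ≤ n)
    (m : Fin n → F[X])
    (hmonic : ∀ i, (m i).Monic)
    (hdeg : ∀ i, 1 ≤ (m i).natDegree)
    (hcop : ∀ i j, i ≠ j → IsCoprime (m i) (m j))
    (k : ℕ) (hk1 : 1 ≤ k) (hkn : k ≤ n)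
    (N K : ℕ)
    (hN : N = (∏ i, m i).natDegree)
    (hK : K = (∏ i ∈ Finset.univ.filter (fun i : Fin n => (i : ℕ) < k), m i).natDegree)
    (hK1 : 1 ≤ K)
    (d : ℕ)
    (hd : IsLeast {w : ℕ | ∃ S : Finset (Fin n),
        N - K < ∑ i ∈ S, (m i).natDegree ∧ w = ∑ i ∈ S, (m i).natDegree} d) :
    IsLeast {w : ℕ | ∃ a : F[X], a ≠ 0 ∧ a.degree < (K : WithBot ℕ) ∧
        w = ∑ i ∈ Finset.univ.filter (fun i : Fin n => a %ₘ m i ≠ 0), (m i).natDegree} d ∧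
    IsLeast {w : ℕ | ∃ a a' : F[X], a.degree < (K : WithBot ℕ) ∧ a'.degree < (K : WithBot ℕ) ∧
        (fun i : Fin n => a %ₘ m i) ≠ (fun i : Fin n => a' %ₘ m i) ∧
        w = ∑ i ∈ Finset.univ.filter (fun i : Fin n => a %ₘ m i ≠ a' %ₘ m i), (m i).natDegree} d ∧
    N - K < d := by
  classical
  have hNsum : N = ∑ i, (m i).natDegree := by
    rw [hN, Polynomial.natDegree_prod _ _ fun i _ => (hmonic i).ne_zero]
  have hKsum : K = ∑ i ∈ Finset.univ.filter (fun i : Fin n => (i : ℕ) < k), (m i).natDegree := by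
    rw [hK, Polynomial.natDegree_prod _ _ fun i _ => (hmonic i).ne_zero]
  have hKN : K ≤ N := by
    rw [hKsum, hNsum]
    exact Finset.sum_le_sum_of_subset (Finset.subset_univ _)
  -- key lower bound: any nonzero codeword has degree weight > N - K
  have key : ∀ b : F[X], b ≠ 0 → b.degree < (K : WithBot ℕ) →
      N - K < ∑ i ∈ Finset.univ.filter (fun i : Fin n => b %ₘ m i ≠ 0), (m i).natDegree := by
    intro b hb0 hbdeg
    set T := Finset.univ.filter (fun i : Fin n => b %ₘ m i ≠ 0) with hT
    have hdvd : (∏ i ∈ Tᶜ, m i) ∣ b := by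
      apply Finset.prod_dvd_of_coprime
      · intro i _ j _ hij
        exact hcop i j hij
      · intro i hi
        rw [← Polynomial.modByMonic_eq_zero_iff_dvd (hmonic i)]
        have : i ∉ T := Finset.mem_compl.mp hi
        simpa [hT] using this
    have h1 : (∏ i ∈ Tᶜ, m i).natDegree ≤ b.natDegree :=
      Polynomial.natDegree_le_of_dvd hdvd hb0
    have h2 : (∏ i ∈ Tᶜ, m i).natDegree = ∑ i ∈ Tᶜ, (m i).natDegree :=
      Polynomial.natDegree_prod _ _ fun i _ => (hmonic i).ne_zero
    have h3 : b.natDegree < K := (Polynomial.natDegree_lt_iff_degree_lt hb0).mpr hbdeg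
    have h4 : (∑ i ∈ T, (m i).natDegree) + ∑ i ∈ Tᶜ, (m i).natDegree = ∑ i, (m i).natDegree :=
      Finset.sum_add_sum_compl T _
    omega
  -- construct a codeword achieving weight d
  obtain ⟨S, hS1, hS2⟩ := hd.1
  set a : F[X] := ∏ i ∈ Sᶜ, m i with ha
  have ha0 : a ≠ 0 := (monic_prod_of_monic _ _ fun i _ => hmonic i).ne_zero
  have haSupp : Finset.univ.filter (fun i : Fin n => a %ₘ m i ≠ 0) = S := by
    ext i
    simp only [Finset.mem_filter, Finset.mem_univ, true_and]
    rw [Ne, Polynomial.modByMonic_eq_zero_iff_dvd (hmonic i)]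
    constructor
    · intro h
      by_contra hiS
      exact h (Finset.dvd_prod_of_mem m (Finset.mem_compl.mpr hiS))
    · intro hiS hdvd
      have hcop' : IsCoprime (m i) a :=
        IsCoprime.prod_right fun j hj =>
          hcop i j (by rintro rfl; exact Finset.mem_compl.mp hj hiS)
      have hu := hcop'.isUnit_of_dvd hdvd
      have := Polynomial.natDegree_eq_zero_of_isUnit hu
      have := hdeg i
      omega
  have hasum : a.natDegree = ∑ i ∈ Sᶜ, (m i).natDegree :=
    Polynomial.natDegree_prod _ _ fun i _ => (hmonic i).ne_zero
  have hSsum : (∑ i ∈ S, (m i).natDegree) + ∑ i ∈ Sᶜ, (m i).natDegree = ∑ i, (m i).natDegree :=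
    Finset.sum_add_sum_compl S _
  have hadeg : a.degree < (K : WithBot ℕ) := by
    rw [← Polynomial.natDegree_lt_iff_degree_lt ha0]
    omega
  have hSne : S.Nonempty := by
    rcases S.eq_empty_or_nonempty with h | h
    · rw [h, Finset.sum_empty] at hS1; omega
    · exact h
  obtain ⟨i₀, hi₀⟩ := hSne
  have hi₀' : a %ₘ m i₀ ≠ 0 := by
    have : i₀ ∈ Finset.univ.filter (fun i : Fin n => a %ₘ m i ≠ 0) := haSupp ▸ hi₀
    simpa using this
  refine ⟨⟨⟨a, ha0, hadeg, by rw [haSupp, hS2]⟩, ?_⟩,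
    ⟨⟨a, 0, hadeg, by rw [Polynomial.degree_zero]; exact WithBot.bot_lt_coe K, ?_, ?_⟩, ?_⟩, hS2 ▸ hS1⟩
  · rintro w ⟨b, hb0, hbdeg, rfl⟩
    exact hd.2 ⟨_, key b hb0 hbdeg, rfl⟩
  · intro h
    have := congrFun h i₀
    rw [Polynomial.zero_modByMonic] at this
    exact hi₀' this
  · rw [show (Finset.univ.filter fun i : Fin n => a %ₘ m i ≠ 0 %ₘ m i)
        = Finset.univ.filter fun i : Fin n => a %ₘ m i ≠ 0 by
      simp [Polynomial.zero_modByMonic], haSupp, hS2]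
  · rintro w ⟨a₁, a₂, h1, h2, hne, rfl⟩
    have hb0 : a₁ - a₂ ≠ 0 := sub_ne_zero.mpr fun h => hne (by rw [h])
    have hbdeg : (a₁ - a₂).degree < (K : WithBot ℕ) :=
      lt_of_le_of_lt (Polynomial.degree_sub_le _ _) (max_lt h1 h2)
    have hfilter : (Finset.univ.filter fun i : Fin n => a₁ %ₘ m i ≠ a₂ %ₘ m i)
        = Finset.univ.filter fun i : Fin n => (a₁ - a₂) %ₘ m i ≠ 0 := by
      apply Finset.filter_congr
      intro i _
      rw [Polynomial.sub_modByMonic, sub_ne_zero]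
    rw [hfilter]
    exact hd.2 ⟨_, key _ hb0 hbdeg, rfl⟩
end

section
/- Let F be a finite field and let C be a set, with at least two elements, of tuples (c_0,…,c_{n-1}) where each c_i ∈ F[x] has deg c_i < deg m_i. Let d_minD be the minimum degree-weighted distance d_D(c,c') over pairs of distinct elements c, c' of C. Then for every subset S ⊆ {0,…,n-1} with w_D(S) > N − d_minD, the cardinality of C satisfies |C| ≤ |F|^{w_D(S)}. (Singleton bound for degree-weighted distance.) -/
open Polynomial Finset

/-- Singleton bound for degree-weighted distance: a code `C` of tuples
`(c₀,…,c_{n-1})` with `deg cᵢ < deg mᵢ` and minimum degree-weighted distance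
`d_minD` satisfies `|C| ≤ |F|^{w_D(S)}` for every `S` with `w_D(S) > N − d_minD`. -/
theorem singleton_bound_degree_weighted
    {F : Type*} [Field F] [Fintype F] [DecidableEq F] (n : ℕ) (hn : 1 ≤ n)
    (m : Fin n → F[X])
    (hmonic : ∀ i, (m i).Monic)
    (hdeg : ∀ i, 1 ≤ (m i).natDegree)
    (hcop : ∀ i j, i ≠ j → IsCoprime (m i) (m j))
    (N : ℕ) (hN : N = (∏ i, m i).natDegree)
    (C : Finset (Fin n → F[X]))
    (hC : ∀ c ∈ C, ∀ i, (c i).degree < (m i).degree)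
    (hCcard : 2 ≤ C.card)
    (dminD : ℕ)
    (hd : IsLeast {w : ℕ | ∃ c ∈ C, ∃ c' ∈ C, c ≠ c' ∧
        w = ∑ i ∈ Finset.univ.filter (fun i : Fin n => c i ≠ c' i), (m i).natDegree} dminD) :
    ∀ S : Finset (Fin n), N - dminD < ∑ i ∈ S, (m i).natDegree →
      C.card ≤ (Fintype.card F) ^ (∑ i ∈ S, (m i).natDegree) := by
  intro S hS
  have hmne : ∀ i, m i ≠ 0 := fun i => (hmonic i).ne_zero
  have htot : ∑ i, (m i).natDegree = N := by
    rw [hN, Polynomial.natDegree_prod _ _ (fun i _ => hmne i)]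
  obtain ⟨⟨c₀, hc₀, c₀', hc₀', hne₀, hval⟩, hlb⟩ := hd
  -- dminD ≥ 1
  have hdmin1 : 1 ≤ dminD := by
    obtain ⟨i, hi⟩ := Function.ne_iff.mp hne₀
    have hmem : i ∈ Finset.univ.filter (fun i : Fin n => c₀ i ≠ c₀' i) := by
      simp [hi]
    calc 1 ≤ (m i).natDegree := hdeg i
      _ ≤ ∑ j ∈ Finset.univ.filter (fun i : Fin n => c₀ i ≠ c₀' i), (m j).natDegree :=
        Finset.single_le_sum (f := fun j => (m j).natDegree) (fun j _ => Nat.zero_le _) hmem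
      _ = dminD := hval.symm
  -- key: elements of C agreeing on S are equal
  have key : ∀ c ∈ C, ∀ c' ∈ C, (∀ i ∈ S, c i = c' i) → c = c' := by
    intro c hc c' hc' hagree
    by_contra hne
    have hge : dminD ≤ ∑ i ∈ Finset.univ.filter (fun i : Fin n => c i ≠ c' i), (m i).natDegree :=
      hlb ⟨c, hc, c', hc', hne, rfl⟩
    have hsub : Finset.univ.filter (fun i : Fin n => c i ≠ c' i) ⊆ Sᶜ := by
      intro i hi
      simp only [Finset.mem_filter, Finset.mem_univ, true_and] at hi
      simp only [Finset.mem_compl]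
      intro hiS
      exact hi (hagree i hiS)
    have hle : ∑ i ∈ Finset.univ.filter (fun i : Fin n => c i ≠ c' i), (m i).natDegree ≤
        ∑ i ∈ Sᶜ, (m i).natDegree :=
      Finset.sum_le_sum_of_subset hsub
    have hsplit : ∑ i ∈ Sᶜ, (m i).natDegree + ∑ i ∈ S, (m i).natDegree = N := by
      rw [← htot, ← Finset.sum_compl_add_sum S (fun i => (m i).natDegree)]
    omega
  -- injective map to coefficient tuples
  classical
  set f : (Fin n → F[X]) → (∀ i : {x // x ∈ S}, Fin ((m i.1).natDegree) → F) :=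
    fun c i j => (c i.1).coeff j with hf
  have hinj : Set.InjOn f C := by
    intro c hc c' hc' hfe
    apply key c hc c' hc'
    intro i hiS
    ext k
    by_cases hk : k < (m i).natDegree
    · exact congrFun (congrFun hfe ⟨i, hiS⟩) ⟨k, hk⟩
    · have hz : ∀ p : F[X], p.degree < (m i).degree → p.coeff k = 0 := by
        intro p hp
        apply Polynomial.coeff_eq_zero_of_degree_lt
        calc p.degree < (m i).degree := hp
          _ = ((m i).natDegree : WithBot ℕ) := (Polynomial.degree_eq_natDegree (hmne i))
          _ ≤ (k : WithBot ℕ) := by exact_mod_cast Nat.not_lt.mp hk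
      rw [hz _ (hC c hc i), hz _ (hC c' hc' i)]
  calc C.card ≤ Fintype.card (∀ i : {x // x ∈ S}, Fin ((m i.1).natDegree) → F) := by
        have : Fintype.card (C : Finset (Fin n → F[X])) ≤
            Fintype.card (∀ i : {x // x ∈ S}, Fin ((m i.1).natDegree) → F) :=
          Fintype.card_le_of_injective (fun c => f c.1) (fun a b hab => by
            exact Subtype.ext (hinj a.2 b.2 hab))
        simpa using this
    _ = ∏ i : {x // x ∈ S}, (Fintype.card F) ^ (m i.1).natDegree := by
        simp [Fintype.card_pi, Fintype.card_fun]
    _ = ∏ i ∈ S, (Fintype.card F) ^ (m i).natDegree := by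
        rw [← Finset.prod_attach S (fun i => (Fintype.card F) ^ (m i).natDegree), Finset.univ_eq_attach]
    _ = (Fintype.card F) ^ (∑ i ∈ S, (m i).natDegree) := by
        rw [← Finset.prod_pow_eq_pow_sum]
end

section
/- Assume F is a finite field and K ≥ 1, and let d_minD be the minimum degree-weighted distance of the polynomial remainder code C. Then the Singleton bound for degree-weighted distance holds with equality: min{ w_D(S) : S ⊆ {0,…,n-1}, w_D(S) > N − d_minD } = K. -/
open Polynomial Finset

/-- Equality in the Singleton bound for degree-weighted distance:
`min{ w_D(S) : w_D(S) > N − d_minD } = K` for a polynomial remainder code over a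
finite field with `K ≥ 1`. -/
theorem singleton_bound_degree_weighted_equality
    {F : Type*} [Field F] [Fintype F] [DecidableEq F] (n : ℕ) (hn : 1 ≤ n)
    (m : Fin n → F[X])
    (hmonic : ∀ i, (m i).Monic)
    (hdeg : ∀ i, 1 ≤ (m i).natDegree)
    (hcop : ∀ i j, i ≠ j → IsCoprime (m i) (m j))
    (k : ℕ) (hk1 : 1 ≤ k) (hkn : k ≤ n)
    (N K : ℕ)
    (hN : N = (∏ i, m i).natDegree)
    (hK : K = (∏ i ∈ Finset.univ.filter (fun i : Fin n => (i : ℕ) < k), m i).natDegree)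
    (hK1 : 1 ≤ K)
    (dminD : ℕ)
    (hd : IsLeast {w : ℕ | ∃ a a' : F[X], a.degree < (K : WithBot ℕ) ∧ a'.degree < (K : WithBot ℕ) ∧
        (fun i : Fin n => a %ₘ m i) ≠ (fun i : Fin n => a' %ₘ m i) ∧
        w = ∑ i ∈ Finset.univ.filter (fun i : Fin n => a %ₘ m i ≠ a' %ₘ m i), (m i).natDegree}
      dminD) :
    IsLeast {w : ℕ | ∃ S : Finset (Fin n),
        N - dminD < ∑ i ∈ S, (m i).natDegree ∧ w = ∑ i ∈ S, (m i).natDegree} K := by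
  have hmne : ∀ i, m i ≠ 0 := fun i => (hmonic i).ne_zero
  have hNsum : N = ∑ i, (m i).natDegree := by
    rw [hN, Polynomial.natDegree_prod]; intro i _; exact hmne i
  have hKsum : K = ∑ i ∈ Finset.univ.filter (fun i : Fin n => (i : ℕ) < k),
      (m i).natDegree := by
    rw [hK, Polynomial.natDegree_prod]; intro i _; exact hmne i
  have hKN : K ≤ N := by
    rw [hNsum, hKsum]
    exact Finset.sum_le_sum_of_subset (Finset.filter_subset _ _)
  -- Step A : N - dminD < K
  have hstepA : N - dminD < K := by
    obtain ⟨a, a', ha, ha', hne, hw⟩ := hd.1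
    set T := Finset.univ.filter (fun i : Fin n => a %ₘ m i ≠ a' %ₘ m i) with hT
    have hsub : a - a' ≠ 0 := by
      intro h
      rw [sub_eq_zero] at h
      exact hne (by rw [h])
    -- every modulus at an agreeing position divides a - a'
    have hdvd : ∀ i ∈ Finset.univ.filter (fun i : Fin n => ¬ (a %ₘ m i ≠ a' %ₘ m i)),
        m i ∣ a - a' := by
      intro i hi
      simp only [Finset.mem_filter, not_not] at hi
      rw [← Polynomial.modByMonic_eq_zero_iff_dvd (hmonic i), Polynomial.sub_modByMonic,
        hi.2, sub_self]
    have hprod_dvd : (∏ i ∈ Finset.univ.filter (fun i : Fin n => ¬ (a %ₘ m i ≠ a' %ₘ m i)),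
        m i) ∣ a - a' := by
      refine Finset.prod_dvd_of_coprime ?_ hdvd
      intro i _ j _ hij
      exact hcop i j hij
    have hdegsub : (a - a').natDegree < K := by
      rw [Polynomial.natDegree_lt_iff_degree_lt hsub]
      exact lt_of_le_of_lt (Polynomial.degree_sub_le a a') (max_lt ha ha')
    have hsumc : (∑ i ∈ Finset.univ.filter (fun i : Fin n => ¬ (a %ₘ m i ≠ a' %ₘ m i)),
        (m i).natDegree) < K := by
      calc (∑ i ∈ Finset.univ.filter (fun i : Fin n => ¬ (a %ₘ m i ≠ a' %ₘ m i)),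
            (m i).natDegree)
          = (∏ i ∈ Finset.univ.filter (fun i : Fin n => ¬ (a %ₘ m i ≠ a' %ₘ m i)),
            m i).natDegree := by
            rw [Polynomial.natDegree_prod]; intro i _; exact hmne i
        _ ≤ (a - a').natDegree := Polynomial.natDegree_le_of_dvd hprod_dvd hsub
        _ < K := hdegsub
    have hsplit : (∑ i ∈ T, (m i).natDegree) +
        (∑ i ∈ Finset.univ.filter (fun i : Fin n => ¬ (a %ₘ m i ≠ a' %ₘ m i)),
          (m i).natDegree) = N := by
      rw [hNsum, hT]
      exact Finset.sum_filter_add_sum_filter_not _ _ _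
    omega
  constructor
  · -- K is attained by S = {i : i < k}
    refine ⟨Finset.univ.filter (fun i : Fin n => (i : ℕ) < k), ?_, hKsum⟩
    rw [← hKsum]; exact hstepA
  · -- lower bound : every admissible w is ≥ K
    rintro w ⟨S, hS1, hS2⟩
    by_contra hwK
    push_neg at hwK
    have hwN : w ≤ N := by
      rw [hS2, hNsum]
      exact Finset.sum_le_sum_of_subset (Finset.subset_univ S)
    set a : F[X] := ∏ i ∈ S, m i with ha
    have hamonic : a.Monic := Polynomial.monic_prod_of_monic _ _ (fun i _ => hmonic i)
    have hadeg : a.natDegree = w := by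
      rw [ha, Polynomial.natDegree_prod _ _ (fun i _ => hmne i), hS2]
    have hadegK : a.degree < (K : WithBot ℕ) := by
      rw [← Polynomial.natDegree_lt_iff_degree_lt hamonic.ne_zero, hadeg]
      exact hwK
    -- for i ∉ S, m i does not divide a
    have hnotdvd : ∀ i ∉ S, a %ₘ m i ≠ 0 := by
      intro i hi h0
      have hdv : m i ∣ a := (Polynomial.modByMonic_eq_zero_iff_dvd (hmonic i)).mp h0
      have hcp : IsCoprime (m i) a := by
        refine IsCoprime.prod_right ?_
        intro j hj
        exact hcop i j (fun h => hi (h ▸ hj))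
      have : IsUnit (m i) := hcp.isUnit_of_dvd hdv
      have h0' : (m i).natDegree = 0 := Polynomial.natDegree_eq_zero_of_isUnit this
      have := hdeg i
      omega
    have hdvdS : ∀ i ∈ S, a %ₘ m i = 0 := by
      intro i hi
      exact (Polynomial.modByMonic_eq_zero_iff_dvd (hmonic i)).mpr
        (Finset.dvd_prod_of_mem m hi)
    -- the differing set for the pair (a, 0) is exactly Sᶜ
    have hfilter : Finset.univ.filter (fun i : Fin n => a %ₘ m i ≠ (0 : F[X]) %ₘ m i)
        = Sᶜ := by
      ext i
      simp only [Finset.mem_filter, Finset.mem_univ, true_and, Finset.mem_compl,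
        Polynomial.zero_modByMonic]
      constructor
      · intro h hiS
        exact h (hdvdS i hiS)
      · intro h
        exact hnotdvd i h
    -- S ≠ univ, so the two codewords differ
    have hSne : ∃ i : Fin n, i ∉ S := by
      by_contra hall
      push_neg at hall
      have : S = Finset.univ := Finset.eq_univ_iff_forall.mpr hall
      rw [this, ← hNsum] at hS2
      omega
    obtain ⟨i0, hi0⟩ := hSne
    have hfne : (fun i : Fin n => a %ₘ m i) ≠ (fun i : Fin n => (0 : F[X]) %ₘ m i) := by
      intro h
      have := congrFun h i0
      rw [Polynomial.zero_modByMonic] at this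
      exact hnotdvd i0 hi0 this
    -- so dminD ≤ N - w
    have hmem : (∑ i ∈ Finset.univ.filter (fun i : Fin n => a %ₘ m i ≠ (0 : F[X]) %ₘ m i),
        (m i).natDegree) ∈ {w : ℕ | ∃ a a' : F[X], a.degree < (K : WithBot ℕ) ∧
          a'.degree < (K : WithBot ℕ) ∧
          (fun i : Fin n => a %ₘ m i) ≠ (fun i : Fin n => a' %ₘ m i) ∧
          w = ∑ i ∈ Finset.univ.filter (fun i : Fin n => a %ₘ m i ≠ a' %ₘ m i),
            (m i).natDegree} := by
      exact ⟨a, 0, hadegK, by rw [Polynomial.degree_zero]; exact WithBot.bot_lt_coe K, hfne, rfl⟩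
    have hdle := hd.2 hmem
    have hcompl : (∑ i ∈ Sᶜ, (m i).natDegree) = N - w := by
      have := Finset.sum_add_sum_compl S (fun i => (m i).natDegree)
      rw [← hNsum, ← hS2] at this
      omega
    rw [hfilter, hcompl] at hdle
    omega
end

section
/- Key Equation: (i) There exists A ∈ F[x] with deg A < deg Λ_f such that A·M_n = Λ_f·E. (ii) Conversely, if a monic polynomial G ∈ F[x] satisfies A·M_n = G·E for some A ∈ F[x], then Λ_f divides G. -/
open Polynomial Finset

/-- Key Equation: (i) there exists `A` with `deg A < deg Λ_f` and `A·Mₙ = Λ_f·E`;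
(ii) conversely, if a monic `G` satisfies `A·Mₙ = G·E` for some `A`, then `Λ_f ∣ G`. -/
theorem key_equation
    {F : Type*} [Field F] [DecidableEq F] (n : ℕ) (hn : 1 ≤ n)
    (m : Fin n → F[X])
    (hmonic : ∀ i, (m i).Monic)
    (hdeg : ∀ i, 1 ≤ (m i).natDegree)
    (hcop : ∀ i j, i ≠ j → IsCoprime (m i) (m j))
    (Mn : F[X]) (hMn : Mn = ∏ i, m i)
    (E : F[X]) (hE0 : E ≠ 0) (hEdeg : E.degree < Mn.degree)
    (Λf : F[X]) (hΛf : Λf = Mn / gcd E Mn) :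
    (∃ A : F[X], A.degree < Λf.degree ∧ A * Mn = Λf * E) ∧
    (∀ G A : F[X], G.Monic → A * Mn = G * E → Λf ∣ G) := by
  have hMn0 : Mn ≠ 0 := by
    rw [hMn]
    exact prod_ne_zero_iff.mpr fun i _ => (hmonic i).ne_zero
  set g : F[X] := gcd E Mn with hg
  have hg0 : g ≠ 0 := gcd_ne_zero_of_left hE0
  have hMneq : Mn = g * Λf := by
    rw [hΛf]
    exact (EuclideanDomain.mul_div_cancel' hg0 (gcd_dvd_right E Mn)).symm
  have hΛ0 : Λf ≠ 0 := fun h => hMn0 (by rw [hMneq, h, mul_zero])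
  set A0 : F[X] := E / g with hA0
  have hEeq : E = g * A0 := (EuclideanDomain.mul_div_cancel' hg0 (gcd_dvd_left E Mn)).symm
  have hA00 : A0 ≠ 0 := fun h => hE0 (by rw [hEeq, h, mul_zero])
  have hkey : A0 * Mn = Λf * E := by
    rw [hMneq, hEeq]; ring
  have hcopr : IsCoprime A0 Λf := by
    rw [hA0, hΛf]
    exact isCoprime_div_gcd_div_gcd hMn0
  constructor
  · refine ⟨A0, ?_, hkey⟩
    have hdegE : E.degree = g.degree + A0.degree := by
      rw [hEeq, degree_mul]
    have hdegM : Mn.degree = g.degree + Λf.degree := by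
      rw [hMneq, degree_mul]
    rw [hdegE, hdegM] at hEdeg
    exact lt_of_add_lt_add_left hEdeg
  · intro G A hG hAG
    have h1 : A * (g * Λf) = G * (g * A0) := by rw [← hMneq, ← hEeq]; exact hAG
    have h2 : Λf * A = A0 * G := by
      apply mul_left_cancel₀ hg0
      ring_nf
      ring_nf at h1
      linear_combination h1
    have : Λf ∣ A0 * G := ⟨A, h2.symm ▸ rfl⟩
    exact (hcopr.symm.dvd_of_dvd_mul_left (h2 ▸ Dvd.intro A rfl))
end

section
/- Let a ∈ F[x] with deg a < K and let Y = a + E. If G ∈ F[x] is a nonzero multiple of the error factor polynomial Λ_f with deg G ≤ N − K, then (G·Y) mod M_n = G·a; in particular G divides (G·Y) mod M_n and a = ((G·Y) mod M_n) / G. (Error-factor-based interpolation.) -/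
open Polynomial Finset

/-- Error-factor-based interpolation: if `G` is a nonzero multiple of `Λ_f` with
`deg G ≤ N − K` and `Y = a + E` with `deg a < K`, then `(G·Y) mod Mₙ = G·a`;
in particular `G` divides `(G·Y) mod Mₙ` and `a = ((G·Y) mod Mₙ)/G`. -/
theorem error_factor_based_interpolation
    {F : Type*} [Field F] [DecidableEq F] (n : ℕ) (hn : 1 ≤ n)
    (m : Fin n → F[X])
    (hmonic : ∀ i, (m i).Monic)
    (hdeg : ∀ i, 1 ≤ (m i).natDegree)
    (hcop : ∀ i j, i ≠ j → IsCoprime (m i) (m j))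
    (k : ℕ) (hk1 : 1 ≤ k) (hkn : k ≤ n)
    (N K : ℕ)
    (hN : N = (∏ i, m i).natDegree)
    (hK : K = (∏ i ∈ Finset.univ.filter (fun i : Fin n => (i : ℕ) < k), m i).natDegree)
    (Mn : F[X]) (hMn : Mn = ∏ i, m i)
    (E : F[X]) (hE0 : E ≠ 0) (hEdeg : E.degree < Mn.degree)
    (Λf : F[X]) (hΛf : Λf = Mn / gcd E Mn)
    (a : F[X]) (ha : a.degree < (K : WithBot ℕ))
    (G : F[X]) (hG0 : G ≠ 0) (hGmul : Λf ∣ G) (hGdeg : G.natDegree ≤ N - K) :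
    (G * (a + E)) %ₘ Mn = G * a ∧
    G ∣ (G * (a + E)) %ₘ Mn ∧
    ((G * (a + E)) %ₘ Mn) / G = a := by
  have hMnmonic : Mn.Monic := by
    rw [hMn]; exact monic_prod_of_monic _ _ fun i _ => hmonic i
  have hMn0 : Mn ≠ 0 := hMnmonic.ne_zero
  -- gcd facts
  have hgR : gcd E Mn ∣ Mn := gcd_dvd_right E Mn
  have hgL : gcd E Mn ∣ E := gcd_dvd_left E Mn
  have hg0 : gcd E Mn ≠ 0 := fun h => hE0 ((_root_.gcd_eq_zero_iff E Mn).mp h).1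
  have hΛmul : Λf * gcd E Mn = Mn := by
    rw [hΛf, mul_comm]; exact EuclideanDomain.mul_div_cancel' hg0 hgR
  -- Mn ∣ G * E
  have hdvdGE : Mn ∣ G * E := by
    have := mul_dvd_mul hGmul hgL
    rwa [hΛmul] at this
  -- K ≤ N
  have hKN : K ≤ N := by
    rw [hK, hN]
    exact natDegree_le_of_dvd
      (Finset.prod_dvd_prod_of_subset _ _ m (Finset.filter_subset _ _))
      (by rw [← hMn]; exact hMn0)
  have hNdeg : (Mn).degree = (N : WithBot ℕ) := by
    rw [degree_eq_natDegree hMn0, hN, hMn]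
  -- degree (G * a) < degree Mn
  have hGa : (G * a).degree < Mn.degree := by
    rcases eq_or_ne a 0 with rfl | ha0
    · rw [mul_zero, degree_zero, hNdeg]
      exact WithBot.bot_lt_coe N
    · have h1 : a.natDegree < K := (natDegree_lt_iff_degree_lt ha0).mpr ha
      have h2 : (G * a).natDegree = G.natDegree + a.natDegree :=
        natDegree_mul hG0 ha0
      have h3 : (G * a).natDegree < N := by omega
      rw [hNdeg]
      exact (natDegree_lt_iff_degree_lt (mul_ne_zero hG0 ha0)).mp h3
  have key : (G * (a + E)) %ₘ Mn = G * a := by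
    rw [mul_add, add_modByMonic,
      (modByMonic_eq_zero_iff_dvd hMnmonic).mpr hdvdGE, add_zero,
      (modByMonic_eq_self_iff hMnmonic).mpr hGa]
  refine ⟨key, ?_, ?_⟩
  · rw [key]; exact Dvd.intro _ rfl
  · rw [key]; exact mul_div_cancel_left₀ a hG0
end

section
/- Error Factor Test: let a ∈ F[x] with deg a < K, let Y = a + E, let t_D = ⌊(N−K)/2⌋, let G ∈ F[x] be nonzero, and set Z = (G·Y) mod M_n. Assume: (1) deg Λ_f ≤ t_D; (2) deg G ≤ t_D; (3) G divides Z; (4) deg Z − deg G < K (i.e., deg Z < deg G + K). Then Λ_f divides G and Z = G·a. -/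
/-!
Write `g = gcd(E, Mₙ)` and `Λ_f = Mₙ / g`. Multiplying by `Λ_f` kills the error modulo `Mₙ`,
since `Λ_f · E = Mₙ · (E / g)`; hence `Mₙ ∣ Λ_f · (Z − G·a)`. The degree hypotheses make
`deg Λ_f + deg (Z − G·a) < N`, so `Λ_f · (Z − G·a) = 0` and `Z = G·a`. Then `Mₙ ∣ G·E`, i.e.
`Λ_f ∣ G · (E / g)`, and `Λ_f` is coprime to `E / g`.
-/

open Polynomial Finset

section GCDMonoid

variable {R : Type*} [EuclideanDomain R] [GCDMonoid R]

theorem dvd_div_gcd_mul (p q : R) : q ∣ q / gcd p q * p := by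
  refine ⟨p / gcd p q, ?_⟩
  rw [mul_comm, ← EuclideanDomain.mul_div_assoc _ (gcd_dvd_right p q), mul_comm p q,
    EuclideanDomain.mul_div_assoc _ (gcd_dvd_left p q)]

theorem div_gcd_dvd_of_dvd_mul {p q r : R} (hq : q ≠ 0) (h : q ∣ r * p) : q / gcd p q ∣ r := by
  have hg : gcd p q ≠ 0 := gcd_ne_zero_of_right hq
  have hp : gcd p q * (p / gcd p q) = p := EuclideanDomain.mul_div_cancel' hg (gcd_dvd_left p q)
  have hq' : gcd p q * (q / gcd p q) = q := EuclideanDomain.mul_div_cancel' hg (gcd_dvd_right p q)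
  have h' : gcd p q * (q / gcd p q) ∣ gcd p q * (r * (p / gcd p q)) := by
    rwa [hq', mul_left_comm, hp]
  exact (isCoprime_div_gcd_div_gcd hq).symm.dvd_of_dvd_mul_right ((mul_dvd_mul_iff_left hg).mp h')

end GCDMonoid

namespace Polynomial

theorem natDegree_sub_mul_lt {R : Type*} [Ring R] {Z G a : R[X]} {K : ℕ}
    (ha : a.degree < K) (hZ : Z.natDegree < G.natDegree + K) :
    (Z - G * a).natDegree < G.natDegree + K := by
  have hGa : (G * a).natDegree < G.natDegree + K := by
    rcases eq_or_ne a 0 with rfl | ha0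
    · rw [mul_zero, natDegree_zero]; omega
    · have : a.natDegree < K := (natDegree_lt_iff_degree_lt ha0).mpr ha
      exact natDegree_mul_le.trans_lt (by omega)
  exact (natDegree_sub_le _ _).trans_lt (max_lt hZ hGa)

variable {F : Type*} [Field F] [DecidableEq F]

theorem eq_mul_and_div_gcd_dvd_of_dvd_sub {M E G a Z : F[X]} (hM : M ≠ 0)
    (hZ : M ∣ Z - G * (a + E))
    (hdeg : (M / gcd E M).natDegree + (Z - G * a).natDegree < M.natDegree) :
    Z = G * a ∧ M / gcd E M ∣ G := by
  set Λ := M / gcd E M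
  have hΛ : Λ ≠ 0 := right_div_gcd_ne_zero hM
  have hΛZ : M ∣ Λ * (Z - G * a) := by
    have : Λ * (Z - G * a) = Λ * (Z - G * (a + E)) + G * (Λ * E) := by ring
    rw [this]
    exact dvd_add (hZ.mul_left _) ((dvd_div_gcd_mul E M).mul_left _)
  have hZa : Z = G * a := by
    have := eq_zero_of_dvd_of_natDegree_lt hΛZ (natDegree_mul_le.trans_lt hdeg)
    exact sub_eq_zero.mp ((mul_eq_zero.mp this).resolve_left hΛ)
  refine ⟨hZa, div_gcd_dvd_of_dvd_mul hM ?_⟩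
  rwa [hZa, mul_add, sub_add_cancel_left, dvd_neg] at hZ

end Polynomial

theorem error_factor_test_general
    {F : Type*} [Field F] [DecidableEq F] (n : ℕ)
    (m : Fin n → F[X])
    (hmonic : ∀ i, (m i).Monic)
    (k : ℕ)
    (N K : ℕ)
    (hN : N = (∏ i, m i).natDegree)
    (hK : K = (∏ i ∈ Finset.univ.filter (fun i : Fin n => (i : ℕ) < k), m i).natDegree)
    (Mn : F[X]) (hMn : Mn = ∏ i, m i)
    (E : F[X])
    (Λf : F[X]) (hΛf : Λf = Mn / gcd E Mn)
    (a : F[X]) (ha : a.degree < (K : WithBot ℕ))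
    (G : F[X])
    (Z : F[X]) (hZ : Z = (G * (a + E)) %ₘ Mn)
    (h1 : Λf.natDegree ≤ (N - K) / 2)
    (h2 : G.natDegree ≤ (N - K) / 2)
    (h4 : Z.natDegree < G.natDegree + K) :
    Λf ∣ G ∧ Z = G * a := by
  have hMn0 : Mn ≠ 0 := hMn ▸ (monic_prod_of_monic _ _ fun i _ => hmonic i).ne_zero
  have hNdeg : Mn.natDegree = N := by rw [hN, hMn]
  have hKN : K ≤ N := by
    rw [hK, ← hNdeg]
    exact natDegree_le_of_dvd (hMn ▸ prod_dvd_prod_of_subset _ _ _ (filter_subset _ _)) hMn0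
  have hdvd : Mn ∣ Z - G * (a + E) := hZ ▸ dvd_modByMonic_sub _ _
  have hdeg := natDegree_sub_mul_lt ha h4
  obtain ⟨hZGa, hΛG⟩ := eq_mul_and_div_gcd_dvd_of_dvd_sub hMn0 hdvd (by rw [← hΛf]; omega)
  exact ⟨hΛf ▸ hΛG, hZGa⟩

/-- Error Factor Test: with `t_D = ⌊(N−K)/2⌋` and `Z = (G·Y) mod Mₙ`, if
(1) `deg Λ_f ≤ t_D`, (2) `deg G ≤ t_D`, (3) `G ∣ Z`, (4) `deg Z < deg G + K`,
then `Λ_f ∣ G` and `Z = G·a`. -/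
theorem error_factor_test
    {F : Type*} [Field F] [DecidableEq F] (n : ℕ) (hn : 1 ≤ n)
    (m : Fin n → F[X])
    (hmonic : ∀ i, (m i).Monic)
    (hdeg : ∀ i, 1 ≤ (m i).natDegree)
    (hcop : ∀ i j, i ≠ j → IsCoprime (m i) (m j))
    (k : ℕ) (hk1 : 1 ≤ k) (hkn : k ≤ n)
    (N K : ℕ)
    (hN : N = (∏ i, m i).natDegree)
    (hK : K = (∏ i ∈ Finset.univ.filter (fun i : Fin n => (i : ℕ) < k), m i).natDegree)
    (Mn : F[X]) (hMn : Mn = ∏ i, m i)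
    (E : F[X]) (hE0 : E ≠ 0) (hEdeg : E.degree < Mn.degree)
    (Λf : F[X]) (hΛf : Λf = Mn / gcd E Mn)
    (a : F[X]) (ha : a.degree < (K : WithBot ℕ))
    (G : F[X]) (hG0 : G ≠ 0)
    (Z : F[X]) (hZ : Z = (G * (a + E)) %ₘ Mn)
    (h1 : Λf.natDegree ≤ (N - K) / 2)
    (h2 : G.natDegree ≤ (N - K) / 2)
    (h3 : G ∣ Z)
    (h4 : Z.natDegree < G.natDegree + K) :
    Λf ∣ G ∧ Z = G * a :=
  error_factor_test_general n m hmonic k N K hN hK Mn hMn E Λf hΛf a ha G Z hZ h1 h2 h4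
end
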